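/- Let n_1,…,n_c, m, m̃ be positive integers, let X_i ∈ ℝ^{n_i×m} for i = 1,…,c, and let X ∈ ℝ^{n×m} (n = n_1+…+n_c) be the matrix obtained by stacking X_1,…,X_c row-wise. Let A ∈ ℝ^{r×m}, and for each i let F_i ∈ ℝ^{m×m̃} have rank m̃, all with the same column space, with rank(A·F_i) = m̃. Let Z ∈ ℝ^{r×m̃} have column space contained in the column space of A·F_1, and for each i let G_i ∈ ℝ^{m̃×m̃} minimize G ↦ ‖Z − A·F_i·G‖_F. Then the row-wise stack of X_1·F_1·G_1, …, X_c·F_c·G_c equals X·(F_1·G_1); that is, the collaborative representation coincides exactly with the centralized dimensionality-reduced representation X·B for B = F_1·G_1, so the error measure Σ_{i=1}^c ‖X_i B − X_i F_i G_i‖_F² is zero. -/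

import Mathlib

/-- Frobenius norm of a real matrix: the square root of the sum of the squares of its entries. -/
noncomputable def frob {r k : ℕ} (M : Matrix (Fin r) (Fin k) ℝ) : ℝ :=
  Real.sqrt (∑ i, ∑ j, (M i j) ^ 2)

/-!
Every minimizer `Gᵢ` attains the value zero: the columns of `Z` lie in the common column space
of the matrices `A Fᵢ`, so `A Fᵢ Gᵢ = Z` for all `i`. The columns of `Fᵢ Gᵢ` lie in the common
column space of the `Fᵢ`, so `Fᵢ Gᵢ = F₁ H` for some `H`, and then `A F₁ H = Z = A F₁ G₁`.
Since `A F₁` has full column rank it can be cancelled, whence `Fᵢ Gᵢ = F₁ G₁` for every `i`.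
-/

lemma frob_nonneg {r k : ℕ} (M : Matrix (Fin r) (Fin k) ℝ) : 0 ≤ frob M :=
  Real.sqrt_nonneg _

@[simp]
lemma frob_zero (r k : ℕ) : frob (0 : Matrix (Fin r) (Fin k) ℝ) = 0 := by
  simp [frob]

lemma frob_eq_zero_iff {r k : ℕ} (M : Matrix (Fin r) (Fin k) ℝ) : frob M = 0 ↔ M = 0 := by
  rw [frob, Real.sqrt_eq_zero (by positivity),
    Fintype.sum_eq_zero_iff_of_nonneg (fun i => by positivity)]
  simp_rw [funext_iff, Pi.zero_apply, Fintype.sum_eq_zero_iff_of_nonneg (fun _ => sq_nonneg _),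
    funext_iff, Pi.zero_apply, sq_eq_zero_iff, ← Matrix.ext_iff, Matrix.zero_apply]

namespace Matrix

variable {R : Type*} {l m n k : Type*} [Fintype n]

lemma range_mulVecLin_mul_le [Fintype m] [CommSemiring R] (M : Matrix l m R) (N : Matrix m n R) :
    LinearMap.range (M * N).mulVecLin ≤ LinearMap.range M.mulVecLin := by
  rw [mulVecLin_mul]
  exact LinearMap.range_comp_le_range _ _

lemma range_mulVecLin_mul_eq_of_range_eq [Fintype m] [CommSemiring R] (M : Matrix l m R)
    {N N' : Matrix m n R} (h : LinearMap.range N.mulVecLin = LinearMap.range N'.mulVecLin) :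
    LinearMap.range (M * N).mulVecLin = LinearMap.range (M * N').mulVecLin := by
  rw [mulVecLin_mul, mulVecLin_mul, LinearMap.range_comp, LinearMap.range_comp, h]

lemma exists_mul_eq_of_range_mulVecLin_le [CommSemiring R] [Fintype k] [DecidableEq k]
    {M : Matrix l n R} {Z : Matrix l k R}
    (h : LinearMap.range Z.mulVecLin ≤ LinearMap.range M.mulVecLin) :
    ∃ H : Matrix n k R, M * H = Z := by
  have hcol : ∀ j, ∃ v, M *ᵥ v = Z *ᵥ Pi.single j 1 := fun j =>
    h (LinearMap.mem_range_self Z.mulVecLin (Pi.single j 1))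
  choose g hg using hcol
  refine ⟨(of g)ᵀ, ext_of_mulVec_single fun j => ?_⟩
  rw [← mulVec_mulVec, mulVec_single_one, col_transpose, ← hg j]
  rfl

lemma mulVecLin_injective_of_rank_eq_card [Field R] {M : Matrix m n R}
    (h : M.rank = Fintype.card n) : Function.Injective M.mulVecLin := by
  rw [← LinearMap.ker_eq_bot, ← Submodule.finrank_eq_zero]
  have := M.mulVecLin.finrank_range_add_finrank_ker
  rw [← rank, h, Module.finrank_fintype_fun_eq_card] at this
  omega

lemma mul_right_injective_of_rank_eq_card [Field R] [Fintype k] [DecidableEq k] {M : Matrix m n R}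
    (h : M.rank = Fintype.card n) : Function.Injective (fun H : Matrix n k R => M * H) := by
  intro H H' (hHH' : M * H = M * H')
  refine ext_of_mulVec_single fun j => mulVecLin_injective_of_rank_eq_card h ?_
  simp only [mulVecLin_apply, mulVec_mulVec, hHH']

end Matrix

lemma mul_eq_of_forall_frob_sub_mul_le {r p q : ℕ} {M : Matrix (Fin r) (Fin p) ℝ}
    {Z : Matrix (Fin r) (Fin q) ℝ} {G : Matrix (Fin p) (Fin q) ℝ}
    (hZ : LinearMap.range Z.mulVecLin ≤ LinearMap.range M.mulVecLin)
    (hmin : ∀ G' : Matrix (Fin p) (Fin q) ℝ, frob (Z - M * G) ≤ frob (Z - M * G')) :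
    M * G = Z := by
  obtain ⟨H, hH⟩ := Matrix.exists_mul_eq_of_range_mulVecLin_le hZ
  have hzero : frob (Z - M * G) = 0 :=
    le_antisymm (by simpa [hH] using hmin H) (frob_nonneg _)
  exact (sub_eq_zero.mp ((frob_eq_zero_iff _).mp hzero)).symm

theorem collaborative_equals_centralized_general
    (c m mt r : ℕ) (hc : 0 < c)
    (n : Fin c → ℕ)
    (X : (i : Fin c) → Matrix (Fin (n i)) (Fin m) ℝ)
    (A : Matrix (Fin r) (Fin m) ℝ)
    (F : Fin c → Matrix (Fin m) (Fin mt) ℝ)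
    (G : Fin c → Matrix (Fin mt) (Fin mt) ℝ)
    (Z : Matrix (Fin r) (Fin mt) ℝ)
    (hrange : ∀ i j, LinearMap.range (F i).mulVecLin = LinearMap.range (F j).mulVecLin)
    (hrankAF : ∀ i, (A * F i).rank = mt)
    (hZ : LinearMap.range Z.mulVecLin ≤ LinearMap.range (A * F ⟨0, hc⟩).mulVecLin)
    (hmin : ∀ i, ∀ G' : Matrix (Fin mt) (Fin mt) ℝ,
      frob (Z - A * F i * G i) ≤ frob (Z - A * F i * G')) :
    (Matrix.of fun (p : Σ i : Fin c, Fin (n i)) (l : Fin mt) =>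
        (X p.1 * (F p.1 * G p.1)) p.2 l)
      = (Matrix.of fun (p : Σ i : Fin c, Fin (n i)) (l : Fin m) => X p.1 p.2 l)
          * (F ⟨0, hc⟩ * G ⟨0, hc⟩)
    ∧ ∑ i, frob (X i * (F ⟨0, hc⟩ * G ⟨0, hc⟩) - X i * (F i * G i)) ^ 2 = 0 := by
  set i₀ : Fin c := ⟨0, hc⟩
  have hsolve : ∀ i, A * F i * G i = Z := fun i =>
    mul_eq_of_forall_frob_sub_mul_le
      (hZ.trans_eq (Matrix.range_mulVecLin_mul_eq_of_range_eq A (hrange i i₀)).symm) (hmin i)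
  have hFG : ∀ i, F i * G i = F i₀ * G i₀ := by
    intro i
    obtain ⟨H, hH⟩ := Matrix.exists_mul_eq_of_range_mulVecLin_le
      ((Matrix.range_mulVecLin_mul_le (F i) (G i)).trans_eq (hrange i i₀))
    rw [← hH]
    congr 1
    apply Matrix.mul_right_injective_of_rank_eq_card
      ((hrankAF i₀).trans (Fintype.card_fin mt).symm)
    change A * F i₀ * H = A * F i₀ * G i₀
    rw [Matrix.mul_assoc, hH, ← Matrix.mul_assoc, hsolve, hsolve]
  refine ⟨?_, by simp [hFG]⟩
  ext p l
  simp [hFG, Matrix.mul_apply]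

theorem collaborative_equals_centralized
    (c m mt r : ℕ) (hc : 0 < c) (hm : 0 < m) (hmt : 0 < mt)
    (n : Fin c → ℕ) (hn : ∀ i, 0 < n i)
    (X : (i : Fin c) → Matrix (Fin (n i)) (Fin m) ℝ)
    (A : Matrix (Fin r) (Fin m) ℝ)
    (F : Fin c → Matrix (Fin m) (Fin mt) ℝ)
    (G : Fin c → Matrix (Fin mt) (Fin mt) ℝ)
    (Z : Matrix (Fin r) (Fin mt) ℝ)
    (hrankF : ∀ i, (F i).rank = mt)
    (hrange : ∀ i j, LinearMap.range (F i).mulVecLin = LinearMap.range (F j).mulVecLin)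
    (hrankAF : ∀ i, (A * F i).rank = mt)
    (hZ : LinearMap.range Z.mulVecLin ≤ LinearMap.range (A * F ⟨0, hc⟩).mulVecLin)
    (hmin : ∀ i, ∀ G' : Matrix (Fin mt) (Fin mt) ℝ,
      frob (Z - A * F i * G i) ≤ frob (Z - A * F i * G')) :
    (Matrix.of fun (p : Σ i : Fin c, Fin (n i)) (l : Fin mt) =>
        (X p.1 * (F p.1 * G p.1)) p.2 l)
      = (Matrix.of fun (p : Σ i : Fin c, Fin (n i)) (l : Fin m) => X p.1 p.2 l)
          * (F ⟨0, hc⟩ * G ⟨0, hc⟩)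
    ∧ ∑ i, frob (X i * (F ⟨0, hc⟩ * G ⟨0, hc⟩) - X i * (F i * G i)) ^ 2 = 0 :=
  collaborative_equals_centralized_general c m mt r hc n X A F G Z hrange hrankAF hZ hmin
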